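/- 25(√5 - 1)/(9π) = 1 + (9/100)∑_{n=0}^∞ (1/10)_n (9/10)_n/((n+1)!)^2. -/

import Mathlib

open Real

noncomputable def rising (x : ℝ) (n : ℕ) : ℝ := ∏ i ∈ Finset.range n, (x + i)

open Filter Topology

lemma rising_pos {x : ℝ} (hx : 0 < x) (n : ℕ) : 0 < rising x n :=
  Finset.prod_pos fun i _ => by positivity

lemma rising_succ (x : ℝ) (n : ℕ) : rising x (n + 1) = rising x n * (x + n) :=
  Finset.prod_range_succ _ _

/-- `t n = (1/10)_n (9/10)_n / (n!)^2`. -/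
noncomputable def tseq (n : ℕ) : ℝ := rising (1/10) n * rising (9/10) n / (n.factorial : ℝ) ^ 2

/-- `x n = -(100/81) t n (100 n + 9)`, the telescoping antidifference. -/
noncomputable def xseq (n : ℕ) : ℝ := -(100/81) * tseq n * (100 * n + 9)

lemma vterm_eq (n : ℕ) :
    rising (1/10) n * rising (9/10) n / ((n + 1).factorial : ℝ) ^ 2
      = xseq n - xseq (n + 1) := by
  have hfac : ((n + 1).factorial : ℝ) = (n + 1 : ℝ) * (n.factorial : ℝ) := by
    rw [Nat.factorial_succ]; push_cast; ring
  have hf0 : (n.factorial : ℝ) ≠ 0 := Nat.cast_ne_zero.mpr (Nat.factorial_ne_zero n)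
  have hn0 : (n + 1 : ℝ) ≠ 0 := by positivity
  simp only [xseq, tseq, rising_succ, hfac]
  push_cast
  field_simp
  ring

lemma Qn_eq (n : ℕ) (hn : 1 ≤ n) :
    (Real.GammaSeq (1/10) n * Real.GammaSeq (9/10) n)⁻¹
      = rising (1/10) (n + 1) * rising (9/10) (n + 1) / ((n : ℝ) * (n.factorial : ℝ) ^ 2) := by
  have hnpos : (0 : ℝ) < n := by exact_mod_cast hn
  have hpow : (n : ℝ) ^ (1/10 : ℝ) * (n : ℝ) ^ (9/10 : ℝ) = (n : ℝ) := by
    rw [← Real.rpow_add hnpos]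
    norm_num
  have hra : rising (1/10) (n + 1) = ∏ j ∈ Finset.range (n + 1), ((1:ℝ)/10 + j) := rfl
  have hrb : rising (9/10) (n + 1) = ∏ j ∈ Finset.range (n + 1), ((9:ℝ)/10 + j) := rfl
  have hA : (0 : ℝ) < rising (1/10) (n + 1) := rising_pos (by norm_num) _
  have hB : (0 : ℝ) < rising (9/10) (n + 1) := rising_pos (by norm_num) _
  have hf0 : (0:ℝ) < (n.factorial : ℝ) := by exact_mod_cast n.factorial_pos
  rw [Real.GammaSeq, Real.GammaSeq, ← hra, ← hrb]
  rw [div_mul_div_comm, mul_mul_mul_comm, hpow]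
  rw [inv_div]
  congr 1
  ring

lemma tendsto_Q :
    Tendsto (fun n => (Real.GammaSeq (1/10) n * Real.GammaSeq (9/10) n)⁻¹) atTop
      (𝓝 (Real.sin (π/10) / π)) := by
  have h1 : Tendsto (fun n => Real.GammaSeq (1/10) n * Real.GammaSeq (9/10) n) atTop
      (𝓝 (Real.Gamma (1/10) * Real.Gamma (9/10))) :=
    (Real.GammaSeq_tendsto_Gamma (1/10)).mul (Real.GammaSeq_tendsto_Gamma (9/10))
  have hrefl : Real.Gamma (1/10) * Real.Gamma (9/10) = π / Real.sin (π/10) := by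
    have := Real.Gamma_mul_Gamma_one_sub (1/10)
    norm_num at this ⊢
    convert this using 3
    ring
  have hsin : 0 < Real.sin (π/10) :=
    Real.sin_pos_of_pos_of_lt_pi (by positivity)
      (by linarith [Real.pi_pos])
  have hne : Real.Gamma (1/10) * Real.Gamma (9/10) ≠ 0 := by
    rw [hrefl]; positivity
  have := h1.inv₀ hne
  rwa [hrefl, inv_div] at this

lemma Qn_eq' (n : ℕ) (hn : 1 ≤ n) :
    (Real.GammaSeq (1/10) n * Real.GammaSeq (9/10) n)⁻¹
      = tseq n * ((n : ℝ) + 1/10) * ((n : ℝ) + 9/10) / (n : ℝ) := by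
  rw [Qn_eq n hn, tseq, rising_succ, rising_succ]
  have hf0 : ((n.factorial : ℝ)) ≠ 0 := Nat.cast_ne_zero.mpr (Nat.factorial_ne_zero n)
  have hn0 : (n : ℝ) ≠ 0 := by
    exact_mod_cast Nat.one_le_iff_ne_zero.mp hn
  field_simp
  ring

lemma tendsto_r : Tendsto (fun n : ℕ => (n : ℝ) / (((n : ℝ) + 1/10) * ((n : ℝ) + 9/10)))
    atTop (𝓝 0) := by
  have h1 : Tendsto (fun n : ℕ => (n : ℝ)⁻¹) atTop (𝓝 0) := tendsto_inv_atTop_zero.comp tendsto_natCast_atTop_atTop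
  refine tendsto_of_tendsto_of_tendsto_of_le_of_le' tendsto_const_nhds h1 ?_ ?_
  · filter_upwards [eventually_ge_atTop 1] with n hn
    have : (0:ℝ) < n := by exact_mod_cast hn
    positivity
  · filter_upwards [eventually_ge_atTop 1] with n hn
    have hpos : (0:ℝ) < n := by exact_mod_cast hn
    rw [inv_eq_one_div, div_le_div_iff₀ (by positivity) hpos]
    nlinarith

lemma tendsto_t0 : Tendsto tseq atTop (𝓝 0) := by
  have h := tendsto_Q.mul tendsto_r
  rw [mul_zero] at h
  refine h.congr' ?_
  filter_upwards [eventually_ge_atTop 1] with n hn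
  rw [Qn_eq' n hn]
  have hn0 : (n : ℝ) ≠ 0 := by exact_mod_cast Nat.one_le_iff_ne_zero.mp hn
  have hab : (((n : ℝ) + 1/10) * ((n : ℝ) + 9/10)) ≠ 0 := by
    have : (0:ℝ) < n := by exact_mod_cast hn
    positivity
  field_simp

lemma tendsto_main : Tendsto (fun n : ℕ => tseq n * ((n : ℝ) + 9/100)) atTop
    (𝓝 (Real.sin (π/10) / π)) := by
  have h1 : Tendsto (fun n : ℕ => (n : ℝ)⁻¹) atTop (𝓝 0) :=
    tendsto_inv_atTop_zero.comp tendsto_natCast_atTop_atTop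
  have h2 : Tendsto (fun n : ℕ => tseq n * (n : ℝ)⁻¹) atTop (𝓝 0) := by
    simpa using tendsto_t0.mul h1
  have h := (tendsto_Q.sub (tendsto_t0.const_mul (91/100))).sub (h2.const_mul (9/100))
  rw [show Real.sin (π/10) / π - (91/100) * 0 - (9/100) * 0 = Real.sin (π/10) / π by ring] at h
  refine h.congr' ?_
  filter_upwards [eventually_ge_atTop 1] with n hn
  rw [Qn_eq' n hn]
  have hn0 : (n : ℝ) ≠ 0 := by exact_mod_cast Nat.one_le_iff_ne_zero.mp hn
  field_simp
  ring

lemma tendsto_x : Tendsto xseq atTop (𝓝 (-(10000/81) * (Real.sin (π/10) / π))) := by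
  have h := tendsto_main.const_mul (-(10000/81) : ℝ)
  refine h.congr ?_
  intro n
  simp only [xseq]
  ring

lemma hasSum_v : HasSum (fun n : ℕ => rising (1/10) n * rising (9/10) n / ((n + 1).factorial : ℝ) ^ 2)
    (-(100/9) + (10000/81) * (Real.sin (π/10) / π)) := by
  rw [hasSum_iff_tendsto_nat_of_nonneg]
  · have hx0 : xseq 0 = -(100/9) := by
      simp [xseq, tseq, rising]
      norm_num
    have hps : ∀ N, ∑ i ∈ Finset.range N,
        rising (1/10) i * rising (9/10) i / ((i + 1).factorial : ℝ) ^ 2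
          = -(100/9) - xseq N := by
      intro N
      calc ∑ i ∈ Finset.range N,
            rising (1/10) i * rising (9/10) i / ((i + 1).factorial : ℝ) ^ 2
          = ∑ i ∈ Finset.range N, (xseq i - xseq (i+1)) :=
            Finset.sum_congr rfl fun i _ => vterm_eq i
        _ = xseq 0 - xseq N := Finset.sum_range_sub' xseq N
        _ = -(100/9) - xseq N := by rw [hx0]
    have h := tendsto_x.const_sub (-(100/9) : ℝ)
    rw [show -(100/9) - -(10000/81) * (Real.sin (π/10) / π)
        = -(100/9) + (10000/81) * (Real.sin (π/10) / π) from by ring] at h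
    exact h.congr fun N => (hps N).symm
  · intro i
    have h1 : 0 < rising (1/10) i := rising_pos (by norm_num) i
    have h2 : 0 < rising (9/10) i := rising_pos (by norm_num) i
    have h3 : (0:ℝ) < ((i + 1).factorial : ℝ) := by exact_mod_cast (i+1).factorial_pos
    positivity

theorem stmt18 :
    25 * (Real.sqrt 5 - 1) / (9 * π) = 1 + (9/100) *
      ∑' n : ℕ, rising (1/10) n * rising (9/10) n / ((n + 1).factorial : ℝ) ^ 2 := by
  rw [hasSum_v.tsum_eq]
  have hsin : Real.sin (π/10) = (Real.sqrt 5 - 1) / 4 := by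
    have h : π/10 = π/2 - 2*(π/5) := by ring
    rw [h, Real.sin_pi_div_two_sub, Real.cos_two_mul, Real.cos_pi_div_five]
    have h5 : Real.sqrt 5 ^ 2 = 5 := Real.sq_sqrt (by norm_num)
    nlinarith [h5]
  rw [hsin]
  have hpi : π ≠ 0 := Real.pi_ne_zero
  field_simp
  ring
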